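/- arXiv:2310.16827 — 3 statements merged into one kernel-verified Lean document; each statement's English description precedes it below -/
import Mathlib

section
/- Let M be a matroid, A ⊆ B ⊆ V, and U ⊆ V \ B. If the density of U in M/A is finite, then ρ_{M/A}(U) ≤ ρ_{M/B}(U), i.e., contracting a larger set can only increase the density of a disjoint set. -/
open Matroid Set ENNReal

namespace MatroidDCS

variable {α : Type*}

/-- The rank of a set in a matroid: supremum of sizes of independent subsets. -/
noncomputable def er (M : Matroid α) (X : Set α) : ℕ∞ :=
  ⨆ I ∈ {I : Set α | M.Indep I ∧ I ⊆ X}, I.encard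

/-- Contraction of a matroid by a set, defined via the dual. -/
noncomputable def contract (M : Matroid α) (C : Set α) : Matroid α := (M✶ ↾ (M.E \ C))✶

/-- A matroid has no loops: every singleton of the ground set is independent. -/
def Loopless (M : Matroid α) : Prop := ∀ v ∈ M.E, M.Indep {v}

/-- Density of a set in a matroid, valued in `ℝ≥0∞` (so `∅` has density 0 and a
nonempty set of rank 0 has density `⊤`). -/
noncomputable def dens (M : Matroid α) (U : Set α) : ℝ≥0∞ :=
  (U.encard : ℝ≥0∞) / (er M U : ℝ≥0∞)

/-- Union of the first `j` pieces of a decomposition. -/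
def pre (U : ℕ → Set α) (j : ℕ) : Set α := ⋃ i ∈ Finset.range j, U i

/-- `W` is the maximum-cardinality densest subset of `M`. -/
def IsMaxDensest (M : Matroid α) (W : Set α) : Prop :=
  W ⊆ M.E ∧ (∀ X ⊆ M.E, dens M X ≤ dens M W) ∧
    ∀ X ⊆ M.E, dens M X = dens M W → X.encard ≤ W.encard

/-- `U 0, …, U (k-1)` is the greedy density-based decomposition of the ground set of `M'`. -/
structure IsDensityDecomp (M' : Matroid α) (k : ℕ) (U : ℕ → Set α) : Prop where
  cover : pre U k = M'.E
  densest : ∀ j < k, IsMaxDensest (contract M' (pre U j)) (U j)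

open Classical in
/-- Associated density of an element `v` with respect to the decomposition `U` of `V'`. -/
noncomputable def assocDens (M : Matroid α) (V' : Set α) (k : ℕ) (U : ℕ → Set α) (v : α) :
    ℝ≥0∞ :=
  if h : ∃ j, j < k ∧ v ∈ M.closure (pre U (j + 1)) then
    dens (contract (M ↾ V') (pre U (Nat.find h))) (U (Nat.find h))
  else 0

/-- Size of a maximum common independent set within `S`. -/
noncomputable def mu (M₁ M₂ : Matroid α) (S : Set α) : ℕ∞ :=
  ⨆ I ∈ {I : Set α | I ⊆ S ∧ M₁.Indep I ∧ M₂.Indep I}, I.encard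


lemma indep_contract_mono (M : Matroid α) {A B I : Set α}
    (hAB : A ⊆ B) (hI : (contract M B).Indep I) (hIB : I ⊆ M.E \ B) :
    (contract M A).Indep I := by
  rw [contract, Matroid.dual_indep_iff_exists'] at hI ⊢
  obtain ⟨hIE, B', hB', hdisj⟩ := hI
  rw [Matroid.restrict_ground_eq] at hIE ⊢
  rw [Matroid.isBase_restrict_iff'] at hB'
  refine ⟨hIB.trans (diff_subset_diff_right hAB), ?_⟩
  obtain ⟨B'', hB'', hsub⟩ := hB'.indep.subset_isBasis'_of_subset
    (hB'.subset.trans (diff_subset_diff_right hAB))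
  refine ⟨B'', (Matroid.isBase_restrict_iff' ..).2 hB'', ?_⟩
  rw [disjoint_left]
  intro x hxI hxB''
  have hxB' : x ∉ B' := fun h => hdisj.ne_of_mem hxI h rfl
  have hins : M✶.Indep (insert x B') :=
    hB''.indep.subset (insert_subset hxB'' hsub)
  exact hxB' (hB'.mem_of_insert_indep (hIB hxI) hins)

lemma er_contract_mono (M : Matroid α) {A B U : Set α}
    (hAB : A ⊆ B) (hU : U ⊆ M.E \ B) :
    er (contract M B) U ≤ er (contract M A) U := by
  refine iSup_le fun I => iSup_le fun ⟨hI, hIU⟩ => ?_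
  exact le_iSup_of_le I (le_iSup_of_le ⟨indep_contract_mono M hAB hI (hIU.trans hU), hIU⟩ le_rfl)

/-- contracting a larger set can only increase the density of a disjoint set. -/
theorem dens_contract_mono (M : Matroid α) [M.Finite] (A B U : Set α)
    (hAB : A ⊆ B) (hB : B ⊆ M.E) (hU : U ⊆ M.E \ B)
    (hfin : dens (contract M A) U ≠ ⊤) :
    dens (contract M A) U ≤ dens (contract M B) U := by
  unfold dens
  have h := er_contract_mono M hAB hU
  exact ENNReal.div_le_div_left (by exact_mod_cast h) _

end MatroidDCS
end

section
/- Let M be a matroid on V and let B ⊆ V be a subset achieving the maximum density ρ* = max_{U ⊆ V} ρ_M(U), assumed finite. Then for any proper subset A ⊊ B, the density of B \ A in the contracted matroid M/A satisfies ρ_{M/A}(B \ A) ≥ ρ*. -/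
open Matroid Set ENNReal

namespace MatroidDCS

variable {α : Type*}

/-! ### Auxiliary rank lemmas -/

lemma er_eq_encard_of_basis' {M : Matroid α} {I X : Set α} (hI : M.IsBasis' I X) :
    er M X = I.encard := by
  apply le_antisymm
  · refine iSup₂_le fun J hJ => ?_
    obtain ⟨J', hJ', hJJ'⟩ := hJ.1.subset_isBasis'_of_subset hJ.2
    exact (encard_mono hJJ').trans (hJ'.encard_eq_encard hI).le
  · exact le_iSup₂_of_le I ⟨hI.indep, hI.subset⟩ le_rfl

lemma er_eq_encard_of_basis {M : Matroid α} {I X : Set α} (hI : M.IsBasis I X) :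
    er M X = I.encard := er_eq_encard_of_basis' hI.isBasis'

lemma er_ne_top {M : Matroid α} [M.Finite] (X : Set α) : er M X ≠ ⊤ := by
  obtain ⟨I, hI⟩ := M.exists_isBasis' X
  rw [er_eq_encard_of_basis' hI]
  exact (M.ground_finite.subset hI.indep.subset_ground).encard_lt_top.ne

lemma er_restrict (M : Matroid α) (R X : Set α) : er (M ↾ R) X = er M (X ∩ R) := by
  have hset : {I : Set α | (M ↾ R).Indep I ∧ I ⊆ X} = {I : Set α | M.Indep I ∧ I ⊆ X ∩ R} := by
    ext I
    simp only [mem_setOf_eq, restrict_indep_iff, subset_inter_iff]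
    tauto
  unfold er
  rw [hset]

/-- Rank formula for the dual matroid, in subtraction-free form. -/
lemma er_dual {M : Matroid α} [M.Finite] {X : Set α} (hX : X ⊆ M.E) :
    er M✶ X + er M M.E = X.encard + er M (M.E \ X) := by
  obtain ⟨J, hJ⟩ := M.exists_isBasis (M.E \ X) diff_subset
  obtain ⟨B, hB, hJB⟩ := hJ.indep.exists_isBase_superset
  have hJeq : J = B ∩ (M.E \ X) :=
    hJ.eq_of_subset_indep (hB.indep.inter_right _)
      (subset_inter hJB hJ.subset) inter_subset_right
  have hdualb : M✶.IsBasis ((M.E \ B) ∩ X) X := by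
    have := hB.compl_inter_isBasis_of_inter_isBasis (X := M.E \ X) (by rwa [← hJeq])
    rwa [diff_diff_cancel_left hX] at this
  rw [er_eq_encard_of_basis hdualb, er_eq_encard_of_basis hB.isBasis_ground,
    er_eq_encard_of_basis hJ, hJeq]
  -- cardinal identity
  have h1 : (M.E \ B) ∩ X = X \ B := by
    ext x; constructor
    · rintro ⟨⟨-, hxB⟩, hxX⟩; exact ⟨hxX, hxB⟩
    · rintro ⟨hxX, hxB⟩; exact ⟨⟨hX hxX, hxB⟩, hxX⟩
  have h2 : B ∩ (M.E \ X) = B \ X := by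
    ext x; constructor
    · rintro ⟨hxB, -, hxX⟩; exact ⟨hxB, hxX⟩
    · rintro ⟨hxB, hxX⟩; exact ⟨hxB, hB.subset_ground hxB, hxX⟩
  rw [h1, h2, ← encard_diff_add_encard_inter B X, ← encard_diff_add_encard_inter X B,
    inter_comm B X]
  ring

instance dual_finite {M : Matroid α} [M.Finite] : M✶.Finite :=
  ⟨M.ground_finite⟩

instance contract_finite {M : Matroid α} [M.Finite] {A : Set α} :
    (contract M A).Finite := ⟨M.ground_finite.subset diff_subset⟩

/-- Rank formula for contraction, in subtraction-free form. -/
lemma er_contract {M : Matroid α} [M.Finite] {A X : Set α} (hA : A ⊆ M.E)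
    (hX : X ⊆ M.E \ A) : er (contract M A) X + er M A = er M (X ∪ A) := by
  set N := M✶ ↾ (M.E \ A) with hN
  have hCA : contract M A = N✶ := rfl
  rw [hCA]
  haveI : N.Finite := ⟨M.ground_finite.subset diff_subset⟩
  have hNE : N.E = M.E \ A := rfl
  have hXN : X ⊆ N.E := hX
  have h1 : er N✶ X + er N N.E = X.encard + er N (N.E \ X) := er_dual hXN
  have hres : ∀ Z : Set α, Z ⊆ M.E \ A → er N Z = er M✶ Z := by
    intro Z hZ
    rw [hN, er_restrict, inter_eq_self_of_subset_left hZ]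
  set Y : Set α := (M.E \ A) \ X with hY
  have hYE : Y ⊆ M.E := diff_subset.trans diff_subset
  have hcomplY : M.E \ Y = X ∪ A := by
    ext x; constructor
    · rintro ⟨hxE, hxY⟩
      by_cases hxA : x ∈ A
      · exact Or.inr hxA
      · exact Or.inl (by_contra fun hxX => hxY ⟨⟨hxE, hxA⟩, hxX⟩)
    · rintro (hx | hx)
      · exact ⟨(hX hx).1, fun h => h.2 hx⟩
      · exact ⟨hA hx, fun h => h.1.2 hx⟩
  have h2 : er M✶ Y + er M M.E = Y.encard + er M (X ∪ A) := by
    rw [← hcomplY]; exact er_dual hYE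
  have h3 : er M✶ (M.E \ A) + er M M.E = (M.E \ A).encard + er M A := by
    have := er_dual (M := M) (X := M.E \ A) diff_subset
    rwa [diff_diff_cancel_left hA] at this
  have hcard : Y.encard + X.encard = (M.E \ A).encard :=
    encard_diff_add_encard_of_subset hX
  rw [hNE, hres _ Subset.rfl, hres _ diff_subset, ← hY] at h1
  -- now combine h1, h2, h3, hcard by lifting to ℕ
  have hfin : (M.E \ A).Finite := M.ground_finite.subset diff_subset
  have hEtop := er_ne_top (M := M)
  have hDtop := er_ne_top (M := M✶)
  have hCtop := er_ne_top (M := N✶)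
  lift er N✶ X to ℕ using hCtop X with c
  lift er M A to ℕ using hEtop A with rA
  lift er M (X ∪ A) to ℕ using hEtop (X ∪ A) with rXA
  lift er M M.E to ℕ using hEtop M.E with rE
  lift er M✶ Y to ℕ using hDtop Y with dY
  lift er M✶ (M.E \ A) to ℕ using hDtop (M.E \ A) with dA
  lift X.encard to ℕ using ((hfin.subset hX).encard_lt_top).ne with x
  lift Y.encard to ℕ using ((hfin.subset (diff_subset)).encard_lt_top).ne with y
  lift (M.E \ A).encard to ℕ using hfin.encard_lt_top.ne with m
  have h1' : c + dA = x + dY := by exact_mod_cast h1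
  have h2' : dY + rE = y + rXA := by exact_mod_cast h2
  have h3' : dA + rE = m + rA := by exact_mod_cast h3
  have hc' : y + x = m := by exact_mod_cast hcard
  have : c + rA = rXA := by omega
  exact_mod_cast this


/-- contracting a proper subset of a maximum-density set keeps density at least `ρ*`. -/
theorem dens_contract_of_maxDensest (M : Matroid α) [M.Finite] (B : Set α) (hB : B ⊆ M.E)
    (hmax : ∀ U ⊆ M.E, dens M U ≤ dens M B) (hfin : dens M B ≠ ⊤)
    (A : Set α) (hA : A ⊂ B) :
    dens M B ≤ dens (contract M A) (B \ A) := by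
  have hAB : A ⊆ B := hA.subset
  have hAE : A ⊆ M.E := hAB.trans hB
  have hdiff : B \ A ⊆ M.E \ A := diff_subset_diff_left hB
  have hkey : er (contract M A) (B \ A) + er M A = er M B := by
    have := er_contract (M := M) hAE hdiff
    rwa [diff_union_of_subset hAB] at this
  have hBfin : B.Finite := M.ground_finite.subset hB
  have hdne : (B \ A).Nonempty := nonempty_of_ssubset hA
  lift B.encard to ℕ using hBfin.encard_lt_top.ne with b hb
  lift A.encard to ℕ using (hBfin.subset hAB).encard_lt_top.ne with a ha
  lift (B \ A).encard to ℕ using (hBfin.subset diff_subset).encard_lt_top.ne with d hd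
  lift er M B to ℕ using er_ne_top B with rB hrB
  lift er M A to ℕ using er_ne_top A with rA hrA
  lift er (contract M A) (B \ A) to ℕ using er_ne_top (M := contract M A) _ with r hr
  have hda : d + a = b := by
    have h := encard_diff_add_encard_of_subset hAB
    rw [← hb, ← ha, ← hd] at h
    exact_mod_cast h
  have hrr : r + rA = rB := by exact_mod_cast hkey
  have hd0 : d ≠ 0 := by
    intro h0
    rw [h0] at hd
    exact hdne.ne_empty (encard_eq_zero.mp (by exact_mod_cast hd.symm))
  have hb0 : b ≠ 0 := by omega
  have hrB0 : rB ≠ 0 := by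
    intro h0
    apply hfin
    simp only [dens]
    rw [← hb, ← hrB, h0]
    push_cast
    exact ENNReal.div_zero (by exact_mod_cast hb0)
  have hcross : a * rB ≤ b * rA := by
    rcases eq_or_ne a 0 with h | ha0
    · simp [h]
    have hmaxA := hmax A hAE
    simp only [dens] at hmaxA
    rw [← hb, ← ha, ← hrA, ← hrB] at hmaxA
    have hrA0 : rA ≠ 0 := by
      intro h0
      rw [h0] at hmaxA
      push_cast at hmaxA
      rw [ENNReal.div_zero (by exact_mod_cast ha0)] at hmaxA
      exact (ENNReal.div_lt_top (by simp) (by exact_mod_cast hrB0)).ne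
        (top_le_iff.mp hmaxA)
    have h1 : ((a : ℕ∞) : ℝ≥0∞) * ((rB : ℕ∞) : ℝ≥0∞)
        ≤ ((b : ℕ∞) : ℝ≥0∞) * ((rA : ℕ∞) : ℝ≥0∞) := by
      calc ((a : ℕ∞) : ℝ≥0∞) * ((rB : ℕ∞) : ℝ≥0∞)
          = (((a : ℕ∞) : ℝ≥0∞) / ((rA : ℕ∞) : ℝ≥0∞)) * ((rA : ℕ∞) : ℝ≥0∞)
              * ((rB : ℕ∞) : ℝ≥0∞) := by
            rw [ENNReal.div_mul_cancel (by exact_mod_cast hrA0) (by simp)]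
        _ ≤ (((b : ℕ∞) : ℝ≥0∞) / ((rB : ℕ∞) : ℝ≥0∞)) * ((rA : ℕ∞) : ℝ≥0∞)
              * ((rB : ℕ∞) : ℝ≥0∞) :=
            mul_le_mul_left (mul_le_mul_left hmaxA _) _
        _ = (((b : ℕ∞) : ℝ≥0∞) / ((rB : ℕ∞) : ℝ≥0∞)) * ((rB : ℕ∞) : ℝ≥0∞)
              * ((rA : ℕ∞) : ℝ≥0∞) := by ring
        _ = ((b : ℕ∞) : ℝ≥0∞) * ((rA : ℕ∞) : ℝ≥0∞) := by
            rw [ENNReal.div_mul_cancel (by exact_mod_cast hrB0) (by simp)]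
    exact_mod_cast h1
  have hmain : b * r ≤ d * rB := by
    have h1 : b * r + b * rA = d * rB + a * rB := by
      rw [← Nat.mul_add, hrr, ← hda, Nat.add_mul]
    have h2 : b * r + b * rA ≤ d * rB + b * rA :=
      h1.le.trans (Nat.add_le_add_left hcross _)
    exact Nat.le_of_add_le_add_right h2
  simp only [dens]
  rw [← hb, ← hd, ← hrB, ← hr]
  rcases eq_or_ne r 0 with h0 | hr0
  · rw [h0]
    push_cast
    rw [ENNReal.div_zero (by exact_mod_cast hd0)]
    exact le_top
  · rw [ENNReal.le_div_iff_mul_le (Or.inl (by exact_mod_cast hr0)) (Or.inl (by simp)),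
      div_eq_mul_inv, mul_right_comm, ← div_eq_mul_inv,
      ENNReal.div_le_iff_le_mul (Or.inl (by exact_mod_cast hrB0)) (Or.inl (by simp))]
    exact_mod_cast hmain

end MatroidDCS
end

section
/- Let M be a matroid on V with maximum density ρ* = max_{U ⊆ V} ρ_M(U) < +∞. If W₁ and W₂ are two subsets each of density ρ*, then ρ_M(W₁ ∪ W₂) = ρ*. In particular, there is a unique inclusion-maximal densest subset. -/
open Matroid Set ENNReal

namespace MatroidDCS

variable {α : Type*}

lemma encard_le_er {M : Matroid α} {I X : Set α} (h : M.Indep I) (hs : I ⊆ X) :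
    I.encard ≤ er M X :=
  le_iSup₂ (f := fun (J : Set α) (_ : J ∈ {I : Set α | M.Indep I ∧ I ⊆ X}) => J.encard)
    I ⟨h, hs⟩

lemma er_le_encard (M : Matroid α) (X : Set α) : er M X ≤ X.encard :=
  iSup₂_le fun _ hJ => encard_le_encard hJ.2

lemma er_mono (M : Matroid α) {X Y : Set α} (h : X ⊆ Y) : er M X ≤ er M Y :=
  iSup₂_le fun _ hJ => encard_le_er hJ.1 (hJ.2.trans h)

lemma er_submod (M : Matroid α) (X Y : Set α) :
    er M (X ∪ Y) + er M (X ∩ Y) ≤ er M X + er M Y := by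
  obtain ⟨Ii, hIi⟩ := M.exists_isBasis' (X ∩ Y)
  obtain ⟨J, hJ, hIJ⟩ := hIi.indep.subset_isBasis'_of_subset
    (hIi.subset.trans inter_subset_left |>.trans subset_union_left)
  rw [er_eq_encard_of_basis' hJ, er_eq_encard_of_basis' hIi]
  have hsub : J ⊆ X ∪ Y := hJ.subset
  have hkey : J.encard + Ii.encard ≤ (J ∩ X).encard + (J ∩ Y).encard := by
    have h1 : (J ∩ X) ∪ (J ∩ Y) = J := by
      rw [← inter_union_distrib_left, inter_eq_self_of_subset_left hsub]
    have h2 : (J ∩ X) ∩ (J ∩ Y) = J ∩ (X ∩ Y) := by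
      ext x; simp [mem_inter_iff]; tauto
    have := encard_union_add_encard_inter (J ∩ X) (J ∩ Y)
    rw [h1, h2] at this
    rw [← this]
    exact add_le_add le_rfl (encard_le_encard (subset_inter hIJ hIi.subset))
  refine hkey.trans (add_le_add ?_ ?_)
  · exact encard_le_er (hJ.indep.subset inter_subset_left) inter_subset_right
  · exact encard_le_er (hJ.indep.subset inter_subset_left) inter_subset_right

/-- densest sets are closed under union. -/
theorem dens_union_of_maxDensest (M : Matroid α) [M.Finite] (ρstar : ℝ≥0∞) (hfin : ρstar ≠ ⊤)
    (hmax : ∀ U ⊆ M.E, dens M U ≤ ρstar)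
    (W₁ W₂ : Set α) (hW₁ : W₁ ⊆ M.E) (hW₂ : W₂ ⊆ M.E)
    (h1 : dens M W₁ = ρstar) (h2 : dens M W₂ = ρstar) :
    dens M (W₁ ∪ W₂) = ρstar := by
  have hUE : W₁ ∪ W₂ ⊆ M.E := union_subset hW₁ hW₂
  have hIE : W₁ ∩ W₂ ⊆ M.E := inter_subset_left.trans hW₁
  have hle := hmax _ hUE
  rcases eq_or_ne ρstar 0 with h0 | h0
  · subst h0; exact le_antisymm hle (zero_le ..)
  have hEfin := M.ground_finite
  -- abbreviations (in ℝ≥0∞)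
  set a : Set α → ℝ≥0∞ := fun X => (X.encard : ℝ≥0∞) with ha
  set r : Set α → ℝ≥0∞ := fun X => ((er M X : ℕ∞) : ℝ≥0∞) with hr
  have haT : ∀ X ⊆ M.E, a X ≠ ⊤ := by
    intro X hX h
    have h' : (X.encard : ℝ≥0∞) = ⊤ := h
    exact ((hEfin.subset hX).encard_lt_top).ne (ENat.toENNReal_eq_top.mp h')
  have hrT : ∀ X ⊆ M.E, r X ≠ ⊤ := by
    intro X hX h
    have h' : ((er M X : ℕ∞) : ℝ≥0∞) = ⊤ := h
    exact ((er_le_encard M X).trans_lt (hEfin.subset hX).encard_lt_top).ne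
      (ENat.toENNReal_eq_top.mp h')
  have hdens : ∀ X, dens M X = a X / r X := fun X => rfl
  -- W₁ nonempty and positive rank
  have ha1 : a W₁ ≠ 0 := by
    intro h
    rw [hdens, h, ENNReal.zero_div] at h1
    exact h0 h1.symm
  have hr1 : r W₁ ≠ 0 := by
    intro h
    rw [hdens, h, ENNReal.div_zero ha1] at h1
    exact hfin h1.symm
  have ha2 : a W₂ ≠ 0 := by
    intro h
    rw [hdens, h, ENNReal.zero_div] at h2
    exact h0 h2.symm
  have hr2 : r W₂ ≠ 0 := by
    intro h
    rw [hdens, h, ENNReal.div_zero ha2] at h2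
    exact hfin h2.symm
  -- a Wᵢ = ρ* * r Wᵢ
  have h1' : a W₁ / r W₁ = ρstar := h1
  have h2' : a W₂ / r W₂ = ρstar := h2
  have he1 : ρstar * r W₁ = a W₁ := by
    rw [← h1']
    exact ENNReal.div_mul_cancel hr1 (hrT _ hW₁)
  have he2 : ρstar * r W₂ = a W₂ := by
    rw [← h2']
    exact ENNReal.div_mul_cancel hr2 (hrT _ hW₂)
  -- a (W₁ ∩ W₂) ≤ ρ* * r (W₁ ∩ W₂)
  have hint : a (W₁ ∩ W₂) ≤ ρstar * r (W₁ ∩ W₂) := by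
    rcases eq_or_ne (a (W₁ ∩ W₂)) 0 with h | h
    · simp [h]
    have hrI : r (W₁ ∩ W₂) ≠ 0 := by
      intro h'
      have := hmax _ hIE
      rw [hdens, h', ENNReal.div_zero h] at this
      exact hfin (top_le_iff.mp this)
    calc a (W₁ ∩ W₂) = a (W₁ ∩ W₂) / r (W₁ ∩ W₂) * r (W₁ ∩ W₂) :=
          (ENNReal.div_mul_cancel hrI (hrT _ hIE)).symm
      _ ≤ ρstar * r (W₁ ∩ W₂) := mul_le_mul_left (hmax _ hIE) _
  -- submodularity, cast to ℝ≥0∞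
  have hsub : r (W₁ ∪ W₂) + r (W₁ ∩ W₂) ≤ r W₁ + r W₂ := by
    have := er_submod M W₁ W₂
    simp only [hr]
    exact_mod_cast this
  -- cardinality identity
  have hcard : a (W₁ ∪ W₂) + a (W₁ ∩ W₂) = a W₁ + a W₂ := by
    have := encard_union_add_encard_inter W₁ W₂
    simp only [ha]
    exact_mod_cast this
  -- key inequality: ρ* * r(∪) ≤ a(∪)
  have hchain : ρstar * r (W₁ ∪ W₂) + ρstar * r (W₁ ∩ W₂)
      ≤ a (W₁ ∪ W₂) + ρstar * r (W₁ ∩ W₂) := by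
    calc ρstar * r (W₁ ∪ W₂) + ρstar * r (W₁ ∩ W₂)
        = ρstar * (r (W₁ ∪ W₂) + r (W₁ ∩ W₂)) := (mul_add _ _ _).symm
      _ ≤ ρstar * (r W₁ + r W₂) := mul_le_mul_right hsub _
      _ = a W₁ + a W₂ := by rw [mul_add, he1, he2]
      _ = a (W₁ ∪ W₂) + a (W₁ ∩ W₂) := hcard.symm
      _ ≤ a (W₁ ∪ W₂) + ρstar * r (W₁ ∩ W₂) := add_le_add le_rfl hint
  have hmulT : ρstar * r (W₁ ∩ W₂) ≠ ⊤ := ENNReal.mul_ne_top hfin (hrT _ hIE)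
  have hkey : ρstar * r (W₁ ∪ W₂) ≤ a (W₁ ∪ W₂) :=
    (ENNReal.add_le_add_iff_right hmulT).mp hchain
  -- conclude
  refine le_antisymm hle ?_
  rw [hdens]
  have hrU : r (W₁ ∪ W₂) ≠ 0 := by
    intro h
    apply hr1
    have hm : er M W₁ ≤ er M (W₁ ∪ W₂) := er_mono M subset_union_left
    have hm' : r W₁ ≤ r (W₁ ∪ W₂) := by
      show ((er M W₁ : ℕ∞) : ℝ≥0∞) ≤ ((er M (W₁ ∪ W₂) : ℕ∞) : ℝ≥0∞)
      exact_mod_cast hm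
    exact le_antisymm (h ▸ hm') (zero_le ..)
  rw [ENNReal.le_div_iff_mul_le (Or.inl hrU) (Or.inl (hrT _ hUE))]
  exact hkey


end MatroidDCS
end
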